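/- Suppose q and q+2 are both odd prime powers and let G = F_q × F_{q+2} (additive group of order q(q+2)). Then there exists a q-dimensional difference set in G with parameters (4m−1, 2m−1, m−1) for m = (q+1)²/4; explicitly, with α, β primitive elements of F_q, F_{q+2}, the set D = E_1 ∪ E_2 ∪ E_3 ⊆ G^q works, where E_1 = {(0, a^{(i,j)}_0, ..., a^{(i,j)}_{q-2})}, E_2 = {(0, a^{(i,j)}_1, ..., a^{(i,j)}_{q-1})} over i = 0,...,(q−3)/2, j = 0,...,(q−1)/2, E_3 = {(0,...,0)} ∪ {(0, b^{(i)}_0, ..., b^{(i)}_{q-2}) : i = 0,...,q−2}, with a^{(i,j)}_x = (α^{2i+x}, β^{2j+x}) and b^{(i)}_x = (α^{i+x}, 0). -/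

import Mathlib

/-!
Every member `d` of `D` satisfies `d x = d 1 * e x` in the ring `F × F'`, where `e 0 = 0` and
`e x = (α, β) ^ (x - 1)` otherwise, and the values `d 1` run exactly over the twin prime power
set `T = {w | w.2 = 0 ∨ χ(w.1) χ'(w.2) = 1}`. Hence the coordinate differences of `D` are the
sets `T * (e x - e y)`; since `α` and `β` have orders `q - 1` and `q + 1`, the factor
`e x - e y` is a unit, and multiplication by a unit is an additive automorphism.

That `T` is a difference set is a correlation computation:
`2 • 1_T = 1 ⊗ 1 - δ₀ ⊗ 1 + 1 ⊗ δ₀ + δ₀ ⊗ δ₀ + χ ⊗ χ'` (with `δ₀ = Pi.single 0 1` and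
`f ⊗ g = tensor f g`), correlations of tensors factor over the two fields, and on one field the
correlations of `1`, `δ₀` and `χ` are explicit (`∑ₐ χ(a) χ(a - c) = -1` for `c ≠ 0` is a Jacobi
sum). The two mixed terms `χ(c₁) χ'(c₂)` and `χ(-c₁) χ'(-c₂)` cancel because `q` and `q + 2`
differ mod 4, so that `χ(-1) χ'(-1) = -1`.
-/

open Finset

/-- A (v,k,λ) difference set in an additive group G: a k-subset D such that every
nonzero g has exactly λ representations g = d₁ - d₂ with d₁,d₂ ∈ D. -/
def IsAddDiffSet {G : Type*} [AddGroup G] [DecidableEq G] (v k lam : ℕ)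
    (D : Finset G) : Prop :=
  D.card = k ∧ ∀ g : G, g ≠ 0 →
    ((D ×ˢ D).filter (fun p => p.1 - p.2 = g)).card = lam

/-- An n-dimensional (v,k,λ) difference set in an additive group G. -/
def IsAddDiffSetN {G : Type*} [AddGroup G] [DecidableEq G] (n v k lam : ℕ)
    (D : Finset (Fin n → G)) : Prop :=
  D.card = k ∧ ∀ x y : Fin n, x < y →
    IsAddDiffSet v k lam (D.image (fun d => d x - d y))

theorem IsAddDiffSet.image_addEquiv {G H : Type*} [AddGroup G] [DecidableEq G] [AddGroup H]
    [DecidableEq H] {v k lam : ℕ} {D : Finset G} (hD : IsAddDiffSet v k lam D) (e : G ≃+ H) :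
    IsAddDiffSet v k lam (D.image e) := by
  refine ⟨(card_image_of_injective _ e.injective).trans hD.1, fun g hg => ?_⟩
  have : ((D.image e ×ˢ D.image e).filter fun p => p.1 - p.2 = g) =
      ((D ×ˢ D).filter fun p => p.1 - p.2 = e.symm g).image (Prod.map e e) := by
    ext ⟨a, b⟩
    simp only [mem_filter, mem_product, mem_image, Prod.exists, Prod.map, Prod.mk.injEq]
    constructor
    · rintro ⟨⟨⟨a, ha, rfl⟩, ⟨b, hb, rfl⟩⟩, rfl⟩
      exact ⟨a, b, ⟨⟨ha, hb⟩, by simp⟩, rfl, rfl⟩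
    · rintro ⟨a, b, ⟨⟨ha, hb⟩, hab⟩, rfl, rfl⟩
      exact ⟨⟨⟨a, ha, rfl⟩, ⟨b, hb, rfl⟩⟩, by rw [← map_sub, hab, e.apply_symm_apply]⟩
  rw [this, card_image_of_injective _ (e.injective.prodMap e.injective)]
  exact hD.2 _ (by simpa using hg)

theorem IsAddDiffSet.isAddDiffSetN_image_mul {R : Type*} [Ring R] [DecidableEq R]
    {n v k lam : ℕ} {S : Finset R} (hS : IsAddDiffSet v k lam S) (hn : 1 < n) (e : Fin n → R)
    (he : ∀ x y : Fin n, x < y → IsUnit (e x - e y)) :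
    IsAddDiffSetN n v k lam (S.image fun r x => r * e x) := by
  refine ⟨?_, fun x y hxy => ?_⟩
  · obtain ⟨u, hu⟩ := he ⟨0, by omega⟩ ⟨1, hn⟩ (by simp [Fin.lt_def])
    refine (card_image_of_injective _ fun r s hrs => ?_).trans hS.1
    have h0 := congrFun hrs ⟨0, by omega⟩
    have h1 := congrFun hrs ⟨1, hn⟩
    rw [← u.mul_left_inj, hu, mul_sub, mul_sub, h0, h1]
  · obtain ⟨u, hu⟩ := he x y hxy
    rw [image_image]
    convert hS.image_addEquiv (AddAut.mulRight u) using 2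
    ext r
    simp [hu, mul_sub]

section Correlation

variable {G : Type*} [AddCommGroup G] [Fintype G]

def corr (f g : G → ℤ) (c : G) : ℤ := ∑ d, f d * g (d - c)

variable (f f' g g' : G → ℤ) (c : G)

@[simp] lemma corr_add_left : corr (f + f') g c = corr f g c + corr f' g c := by
  simp [corr, add_mul, sum_add_distrib]

@[simp] lemma corr_add_right : corr f (g + g') c = corr f g c + corr f g' c := by
  simp [corr, mul_add, sum_add_distrib]

@[simp] lemma corr_sub_left : corr (f - f') g c = corr f g c - corr f' g c := by
  simp [corr, sub_mul, sum_sub_distrib]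

@[simp] lemma corr_sub_right : corr f (g - g') c = corr f g c - corr f g' c := by
  simp [corr, mul_sub, sum_sub_distrib]

@[simp] lemma corr_smul_left (n : ℤ) : corr (n • f) g c = n * corr f g c := by
  simp [corr, mul_sum, mul_assoc]

@[simp] lemma corr_smul_right (n : ℤ) : corr f (n • g) c = n * corr f g c := by
  simp [corr, mul_sum, mul_left_comm]

@[simp] lemma corr_one_left : corr 1 g c = ∑ a, g a := by
  simp only [corr, Pi.one_apply, one_mul]
  exact Fintype.sum_equiv (Equiv.subRight c) _ _ fun _ => rfl

@[simp] lemma corr_one_right : corr f 1 c = ∑ a, f a := by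
  simp [corr]

lemma corr_indicator [DecidableEq G] (S : Finset G) :
    corr (fun d => if d ∈ S then 1 else 0) (fun d => if d ∈ S then 1 else 0) c =
      ((S ×ˢ S).filter fun p => p.1 - p.2 = c).card := by
  rw [card_filter, sum_product]
  push_cast
  simp only [corr, ite_mul, one_mul, zero_mul, sum_ite_mem, univ_inter]
  refine sum_congr rfl fun d _ => ?_
  have hsolve : ∀ x, d - x = c ↔ d - c = x := fun x => by
    rw [sub_eq_iff_eq_add, sub_eq_iff_eq_add, add_comm]
  simp_rw [hsolve, sum_ite_eq]

end Correlation

section Tensor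

variable {G H : Type*}

def tensor (f : G → ℤ) (g : H → ℤ) : G × H → ℤ := fun w => f w.1 * g w.2

lemma sum_tensor [Fintype G] [Fintype H] (f : G → ℤ) (g : H → ℤ) :
    ∑ w, tensor f g w = (∑ a, f a) * ∑ b, g b := by
  rw [sum_mul_sum, ← Fintype.sum_prod_type']
  rfl

@[simp] lemma corr_tensor [AddCommGroup G] [Fintype G] [AddCommGroup H] [Fintype H]
    (f f' : G → ℤ) (g g' : H → ℤ) (c : G × H) :
    corr (tensor f g) (tensor f' g') c = corr f f' c.1 * corr g g' c.2 := by
  rw [corr, corr, corr, sum_mul_sum, ← Fintype.sum_prod_type']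
  refine sum_congr rfl fun w _ => ?_
  simp only [tensor, Prod.fst_sub, Prod.snd_sub]
  ring

end Tensor

section FiniteField

variable {F : Type*} [Field F] [Fintype F] [DecidableEq F]

lemma ringChar_ne_two_of_odd_card {K : Type*} [Field K] [Fintype K]
    (hq : Odd (Fintype.card K)) : ringChar K ≠ 2 := by
  rw [Ne, FiniteField.even_card_iff_char_two, Nat.odd_iff.mp hq]
  decide

@[simp] lemma corr_single_zero_left (g : F → ℤ) (c : F) :
    corr (Pi.single 0 1) g c = g (-c) := by
  simp [corr, Pi.single_apply]

@[simp] lemma corr_single_zero_right (f : F → ℤ) (c : F) :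
    corr f (Pi.single 0 1) c = f c := by
  simp [corr, Pi.single_apply, sub_eq_zero]

lemma sum_quadraticChar_mul_sub {c : F} (hF : ringChar F ≠ 2) (hc : c ≠ 0) :
    ∑ a, quadraticChar F a * quadraticChar F (a - c) = -1 := by
  set χ := quadraticChar F
  have hJ : jacobiSum χ χ = -χ (-1) := by
    rw [← jacobiSum_nontrivial_inv (quadraticChar_ne_one hF), (quadraticChar_isQuadratic F).inv]
  calc ∑ a, χ a * χ (a - c) = ∑ x, χ (c * x) * χ (c * x - c) :=
        (Fintype.sum_bijective _ (mulLeft_bijective₀ c hc) _ _ fun _ => rfl).symm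
    _ = χ (-1) * jacobiSum χ χ := by
        rw [jacobiSum, mul_sum]
        refine sum_congr rfl fun x _ => ?_
        rw [show c * x - c = -1 * (c * (1 - x)) by ring, map_mul, map_mul, map_mul]
        linear_combination (χ (-1) * χ x * χ (1 - x)) * quadraticChar_sq_one (F := F) hc
    _ = -1 := by
        rw [hJ, mul_neg, ← pow_two, quadraticChar_sq_one (neg_ne_zero.mpr one_ne_zero)]

lemma corr_quadraticChar (hF : ringChar F ≠ 2) (c : F) :
    corr (quadraticChar F) (quadraticChar F) c =
      Fintype.card F * (Pi.single 0 1 : F → ℤ) c - 1 := by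
  rcases eq_or_ne c 0 with rfl | hc
  · have hsq : ∀ a : F, quadraticChar F a * quadraticChar F (a - 0) =
        1 - (Pi.single 0 1 : F → ℤ) a := by
      intro a
      rcases eq_or_ne a 0 with rfl | ha
      · simp
      · rw [sub_zero, ← pow_two, quadraticChar_sq_one ha, Pi.single_eq_of_ne ha, sub_zero]
    rw [corr, sum_congr rfl fun a _ => hsq a]
    simp
  · rw [corr, sum_quadraticChar_mul_sub hF hc, Pi.single_eq_of_ne hc]
    ring

end FiniteField

section TwinPrimePowerSet

variable (F F' : Type*) [Field F] [Fintype F] [DecidableEq F] [Field F'] [Fintype F']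
  [DecidableEq F']

def twinPrimePowerSet : Finset (F × F') :=
  univ.filter fun w => w.2 = 0 ∨ quadraticChar F w.1 * quadraticChar F' w.2 = 1

variable {F F'}

lemma two_smul_indicator_twinPrimePowerSet :
    (2 : ℤ) • (fun w => if w ∈ twinPrimePowerSet F F' then 1 else 0) =
      tensor 1 1 - tensor (Pi.single 0 1) 1 + tensor 1 (Pi.single 0 1) +
        tensor (Pi.single 0 1) (Pi.single 0 1) + tensor (quadraticChar F) (quadraticChar F') := by
  funext ⟨x, y⟩
  rcases eq_or_ne y 0 with rfl | hy
  · rcases eq_or_ne x 0 with rfl | hx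
    · simp [twinPrimePowerSet, tensor]
    · simp [twinPrimePowerSet, tensor, hx]
  rcases eq_or_ne x 0 with rfl | hx
  · simp [twinPrimePowerSet, tensor, hy]
  rcases quadraticChar_dichotomy hx with h | h <;>
    rcases quadraticChar_dichotomy hy with h' | h' <;>
    simp [twinPrimePowerSet, tensor, hx, hy, h, h', -quadraticChar_apply]

lemma quadraticChar_neg_one_mul_of_card_add_two (hq : Odd (Fintype.card F))
    (hq' : Fintype.card F' = Fintype.card F + 2) :
    quadraticChar F (-1) * quadraticChar F' (-1) = -1 := by
  have hq'odd : Odd (Fintype.card F') := hq' ▸ hq.add_even even_two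
  rw [quadraticChar_neg_one (ringChar_ne_two_of_odd_card hq),
    quadraticChar_neg_one (ringChar_ne_two_of_odd_card hq'odd), ZMod.χ₄_nat_eq_if_mod_four,
    ZMod.χ₄_nat_eq_if_mod_four, hq']
  have h4 : Fintype.card F % 4 = 1 ∨ Fintype.card F % 4 = 3 := by
    obtain ⟨r, hr⟩ := hq
    omega
  rcases h4 with h4 | h4 <;> simp [h4, Nat.add_mod, Nat.odd_iff.mp hq]

lemma two_mul_card_twinPrimePowerSet (hq : Odd (Fintype.card F)) :
    2 * ((twinPrimePowerSet F F').card : ℤ) =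
      Fintype.card F * Fintype.card F' - Fintype.card F' + Fintype.card F + 1 := by
  have h : 2 * ((twinPrimePowerSet F F').card : ℤ) =
      ∑ w, ((2 : ℤ) • fun w => if w ∈ twinPrimePowerSet F F' then 1 else 0) w := by
    rw [mul_comm]
    simp
  rw [h, two_smul_indicator_twinPrimePowerSet]
  simp [sum_add_distrib, sum_sub_distrib, sum_tensor, -quadraticChar_apply,
    quadraticChar_sum_zero (ringChar_ne_two_of_odd_card hq)]

lemma four_mul_card_filter_sub_twinPrimePowerSet (hq : Odd (Fintype.card F))
    (hq' : Fintype.card F' = Fintype.card F + 2) {c : F × F'} (hc : c ≠ 0) :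
    4 * (((twinPrimePowerSet F F' ×ˢ twinPrimePowerSet F F').filter
        fun p => p.1 - p.2 = c).card : ℤ) = Fintype.card F * Fintype.card F' - 3 := by
  have hF := ringChar_ne_two_of_odd_card hq
  have hF' := ringChar_ne_two_of_odd_card (hq' ▸ hq.add_even even_two)
  set ι : F × F' → ℤ := fun w => if w ∈ twinPrimePowerSet F F' then 1 else 0
  have hq'Z : (Fintype.card F' : ℤ) = Fintype.card F + 2 := by exact_mod_cast hq'
  obtain ⟨c₁, c₂⟩ := c
  have hneg : quadraticChar F (-c₁) * quadraticChar F' (-c₂) =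
      -(quadraticChar F c₁ * quadraticChar F' c₂) := by
    rw [neg_eq_neg_one_mul c₁, neg_eq_neg_one_mul c₂, map_mul, map_mul]
    linear_combination (quadraticChar F c₁ * quadraticChar F' c₂) *
      quadraticChar_neg_one_mul_of_card_add_two hq hq'
  calc 4 * (((twinPrimePowerSet F F' ×ˢ twinPrimePowerSet F F').filter
        fun p => p.1 - p.2 = (c₁, c₂)).card : ℤ)
      = corr ((2 : ℤ) • ι) ((2 : ℤ) • ι) (c₁, c₂) := by
        rw [corr_smul_left, corr_smul_right, corr_indicator]
        ring
    _ = Fintype.card F * Fintype.card F' - 3 := by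
      rw [two_smul_indicator_twinPrimePowerSet]
      simp only [corr_add_left, corr_add_right, corr_sub_left, corr_sub_right, corr_tensor,
        corr_one_left, corr_one_right, corr_single_zero_left, corr_single_zero_right,
        corr_quadraticChar hF, corr_quadraticChar hF', quadraticChar_sum_zero hF,
        quadraticChar_sum_zero hF', Pi.one_apply, sum_const, card_univ, nsmul_eq_mul, mul_one,
        sum_pi_single', mem_univ, if_true, hneg]
      rcases eq_or_ne c₁ 0 with rfl | h₁ <;> rcases eq_or_ne c₂ 0 with rfl | h₂
      · exact absurd rfl hc
      · simp [Pi.single_eq_of_ne h₂, hq'Z]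
        ring
      · simp [Pi.single_eq_of_ne h₁, hq'Z]
        ring
      · simp [Pi.single_eq_of_ne h₁, Pi.single_eq_of_ne h₂, hq'Z, -quadraticChar_apply]
        ring

theorem isAddDiffSet_twinPrimePowerSet {m : ℕ} (hq : Odd (Fintype.card F))
    (hq' : Fintype.card F' = Fintype.card F + 2) (hm : (Fintype.card F + 1) ^ 2 = 4 * m) :
    IsAddDiffSet (4 * m - 1) (2 * m - 1) (m - 1) (twinPrimePowerSet F F') := by
  have hmZ : ((Fintype.card F : ℤ) + 1) ^ 2 = 4 * m := by exact_mod_cast hm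
  have hq'Z : (Fintype.card F' : ℤ) = Fintype.card F + 2 := by exact_mod_cast hq'
  refine ⟨?_, fun c hc => ?_⟩
  · have h := two_mul_card_twinPrimePowerSet (F' := F') hq
    rw [hq'Z, show (Fintype.card F : ℤ) * (Fintype.card F + 2) - (Fintype.card F + 2) +
      Fintype.card F + 1 = 4 * m - 2 by linear_combination hmZ] at h
    omega
  · have h := four_mul_card_filter_sub_twinPrimePowerSet hq hq' hc
    rw [hq'Z, show (Fintype.card F : ℤ) * (Fintype.card F + 2) - 3 = 4 * m - 4 by
      linear_combination hmZ] at h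
    omega

end TwinPrimePowerSet

section PrimitiveRoot

variable {F : Type*} [Field F] [Fintype F] {α : F}

lemma isPrimitiveRoot_of_forall_exists_pow_eq (hF : ringChar F ≠ 2)
    (hα : ∀ x : F, x ≠ 0 → ∃ m : ℕ, α ^ m = x) : IsPrimitiveRoot α (Fintype.card F - 1) := by
  have hα0 : α ≠ 0 := by
    rintro rfl
    obtain ⟨m, hm⟩ := hα (-1) (neg_ne_zero.mpr one_ne_zero)
    rcases m.eq_zero_or_pos with rfl | hm0
    · exact Ring.neg_one_ne_one_of_char_ne_two hF (by simpa using hm.symm)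
    · simp [zero_pow hm0.ne'] at hm
  classical
  have horder : orderOf (Units.mk0 α hα0) = Fintype.card F - 1 := by
    rw [orderOf_eq_card_of_forall_mem_powers, Nat.card_eq_fintype_card, Fintype.card_units]
    intro u
    obtain ⟨m, hm⟩ := hα u u.ne_zero
    exact ⟨m, Units.ext (by simpa using hm)⟩
  exact IsPrimitiveRoot.coe_units_iff.mpr (horder ▸ IsPrimitiveRoot.orderOf _)

variable (hα : IsPrimitiveRoot α (Fintype.card F - 1))
include hα

lemma IsPrimitiveRoot.exists_pow_eq_of_ne_zero {x : F} (hx : x ≠ 0) :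
    ∃ n < Fintype.card F - 1, α ^ n = x :=
  have : NeZero (Fintype.card F - 1) := ⟨by have := Fintype.one_lt_card (α := F); omega⟩
  hα.eq_pow_of_pow_eq_one (FiniteField.pow_card_sub_one_eq_one x hx)

lemma IsPrimitiveRoot.quadraticChar_pow [DecidableEq F] (hF : ringChar F ≠ 2) (n : ℕ) :
    quadraticChar F (α ^ n) = (-1) ^ n := by
  have hq : 2 < Fintype.card F := by
    have := Fintype.one_lt_card (α := F)
    have := FiniteField.even_card_iff_char_two.not.mp hF
    omega
  have hsq : α ^ (Fintype.card F / 2) ≠ 1 := by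
    rw [Ne, hα.pow_eq_one_iff_dvd]
    exact Nat.not_dvd_of_pos_of_lt (by omega) (by omega)
  rw [map_pow, quadraticChar_eq_pow_of_char_ne_two hF (hα.ne_zero (by omega)), if_neg hsq]

end PrimitiveRoot

theorem twinPrimePowerSet_eq_union {F F' : Type*} [Field F] [Fintype F] [DecidableEq F]
    [Field F'] [Fintype F'] [DecidableEq F'] (hq : Odd (Fintype.card F))
    (hq' : Fintype.card F' = Fintype.card F + 2) {α : F} {β : F'}
    (hα : IsPrimitiveRoot α (Fintype.card F - 1))
    (hβ : IsPrimitiveRoot β (Fintype.card F' - 1)) :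
    twinPrimePowerSet F F' =
      (range ((Fintype.card F - 1) / 2) ×ˢ range ((Fintype.card F + 1) / 2)).image
          (fun p => (α ^ (2 * p.1), β ^ (2 * p.2))) ∪
        (range ((Fintype.card F - 1) / 2) ×ˢ range ((Fintype.card F + 1) / 2)).image
          (fun p => (α ^ (2 * p.1 + 1), β ^ (2 * p.2 + 1))) ∪
        ({0} ∪ (range (Fintype.card F - 1)).image fun i => (α ^ i, 0)) := by
  have hF := ringChar_ne_two_of_odd_card hq
  have hF' := ringChar_ne_two_of_odd_card (hq' ▸ hq.add_even even_two)
  have hχ (i j : ℕ) : quadraticChar F (α ^ i) * quadraticChar F' (β ^ j) = (-1) ^ (i + j) := by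
    rw [hα.quadraticChar_pow hF, hβ.quadraticChar_pow hF', pow_add]
  ext ⟨x, y⟩
  simp only [twinPrimePowerSet, mem_filter, mem_univ, true_and, mem_union, mem_singleton,
    mem_image, mem_product, mem_range, Prod.exists, Prod.mk.injEq, Prod.mk_eq_zero]
  constructor
  · rintro (rfl | hxy)
    · rcases eq_or_ne x 0 with rfl | hx
      · simp
      obtain ⟨n, hn, rfl⟩ := hα.exists_pow_eq_of_ne_zero hx
      exact Or.inr (Or.inr ⟨n, hn, rfl, rfl⟩)
    have hx : x ≠ 0 := by rintro rfl; simp at hxy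
    have hy : y ≠ 0 := by rintro rfl; simp at hxy
    obtain ⟨n, hn, rfl⟩ := hα.exists_pow_eq_of_ne_zero hx
    obtain ⟨k, hk, rfl⟩ := hβ.exists_pow_eq_of_ne_zero hy
    rw [hχ, neg_one_pow_eq_one_iff_even (by decide)] at hxy
    have hq2 := Nat.odd_iff.mp hq
    left
    rcases Nat.even_or_odd n with ⟨i, rfl⟩ | ⟨i, rfl⟩
    · obtain ⟨j, rfl⟩ : Even k := by simpa [Nat.even_add] using hxy
      exact Or.inl ⟨i, j, ⟨by omega, by omega⟩, by ring_nf, by ring_nf⟩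
    · obtain ⟨j, rfl⟩ : Odd k := by simpa [Nat.even_add, Nat.not_even_iff_odd] using hxy
      exact Or.inr ⟨i, j, ⟨by omega, by omega⟩, rfl, rfl⟩
  · rintro ((⟨i, j, -, rfl, rfl⟩ | ⟨i, j, -, rfl, rfl⟩) | ⟨rfl, rfl⟩ | ⟨i, -, rfl, rfl⟩)
    · right
      rw [hχ, ← mul_add, pow_mul, neg_one_sq, one_pow]
    · right
      rw [hχ, show 2 * i + 1 + (2 * j + 1) = 2 * (i + j + 1) by ring, pow_mul, neg_one_sq,
        one_pow]
    all_goals exact Or.inl rfl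

def shiftedPowers {R : Type*} [Semiring R] (γ : R) (n : ℕ) : Fin n → R :=
  fun x => if (x : ℕ) = 0 then 0 else γ ^ ((x : ℕ) - 1)

lemma IsPrimitiveRoot.isUnit_shiftedPowers_sub {F F' : Type*} [Field F] [Field F'] {α : F}
    {β : F'} {k k' n : ℕ} (hα : IsPrimitiveRoot α k) (hβ : IsPrimitiveRoot β k') (hkk' : k ≤ k')
    (hn : n ≤ k + 1) {x y : Fin n} (hxy : x < y) :
    IsUnit (shiftedPowers (α, β) n x - shiftedPowers (α, β) n y) := by
  rw [Fin.lt_def] at hxy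
  have hy : (y : ℕ) ≠ 0 := by omega
  by_cases hx : (x : ℕ) = 0
  · simp only [shiftedPowers, if_pos hx, if_neg hy, zero_sub, IsUnit.neg_iff]
    exact (Prod.isUnit_iff.mpr ⟨hα.isUnit (by omega), hβ.isUnit (by omega)⟩).pow _
  · simp only [shiftedPowers, if_neg hx, if_neg hy, Prod.isUnit_iff, Prod.pow_mk,
      Prod.mk_sub_mk, isUnit_iff_ne_zero, Ne, sub_eq_zero]
    exact ⟨fun h => by have := hα.pow_inj (by omega) (by omega) h; omega,
      fun h => by have := hβ.pow_inj (by omega) (by omega) h; omega⟩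

theorem twin_prime_power_qdim_diffSet
    {F F' : Type*} [Field F] [Fintype F] [DecidableEq F]
    [Field F'] [Fintype F'] [DecidableEq F']
    (q : ℕ) (hodd : Odd q) (hq : Fintype.card F = q) (hq' : Fintype.card F' = q + 2)
    (α : F) (hα : ∀ x : F, x ≠ 0 → ∃ m : ℕ, α ^ m = x)
    (β : F') (hβ : ∀ x : F', x ≠ 0 → ∃ m : ℕ, β ^ m = x)
    (m : ℕ) (hm : m = (q + 1) ^ 2 / 4)
    (a : ℕ → ℕ → ℕ → F × F') (ha : ∀ i j x, a i j x = (α ^ (2 * i + x), β ^ (2 * j + x)))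
    (b : ℕ → ℕ → F × F') (hb : ∀ i x, b i x = (α ^ (i + x), 0))
    (E1 E2 E3 D : Finset (Fin q → F × F'))
    (hE1 : E1 = ((Finset.range ((q - 1) / 2)) ×ˢ (Finset.range ((q + 1) / 2))).image
      (fun p => fun x : Fin q =>
        if (x : ℕ) = 0 then 0 else a p.1 p.2 ((x : ℕ) - 1)))
    (hE2 : E2 = ((Finset.range ((q - 1) / 2)) ×ˢ (Finset.range ((q + 1) / 2))).image
      (fun p => fun x : Fin q =>
        if (x : ℕ) = 0 then 0 else a p.1 p.2 (x : ℕ)))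
    (hE3 : E3 = {(fun _ : Fin q => (0 : F × F'))} ∪
      (Finset.range (q - 1)).image (fun i => fun x : Fin q =>
        if (x : ℕ) = 0 then 0 else b i ((x : ℕ) - 1)))
    (hD : D = E1 ∪ E2 ∪ E3) :
    IsAddDiffSetN q (4 * m - 1) (2 * m - 1) (m - 1) D := by
  subst hq hm hE1 hE2 hE3
  have hα' := isPrimitiveRoot_of_forall_exists_pow_eq (ringChar_ne_two_of_odd_card hodd) hα
  have hβ' := isPrimitiveRoot_of_forall_exists_pow_eq
    (ringChar_ne_two_of_odd_card (hq' ▸ hodd.add_even even_two)) hβ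
  have hD' : D = (twinPrimePowerSet F F').image fun r x => r * shiftedPowers (α, β) _ x := by
    rw [hD, twinPrimePowerSet_eq_union hodd hq' hα' hβ', image_union, image_union, image_union,
      image_singleton, image_image, image_image, image_image]
    refine congrArg₂ (· ∪ ·) (congrArg₂ (· ∪ ·) (image_congr fun p _ => ?_)
      (image_congr fun p _ => ?_)) (congrArg₂ (· ∪ ·) (by simp) (image_congr fun i _ => ?_))
    all_goals
      funext x
      by_cases hx : (x : ℕ) = 0
      · simp only [shiftedPowers, Function.comp_apply, if_pos hx, mul_zero]
      · obtain ⟨k, hk⟩ := Nat.exists_eq_add_one_of_ne_zero hx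
        simp only [shiftedPowers, Function.comp_apply, hk, if_neg (Nat.add_one_ne_zero k),
          Nat.add_sub_cancel, ha, hb, Prod.pow_mk, Prod.mk_mul_mk]
        ext <;> ring
  have hm : (Fintype.card F + 1) ^ 2 = 4 * ((Fintype.card F + 1) ^ 2 / 4) :=
    (Nat.mul_div_cancel' (by simpa using pow_dvd_pow_of_dvd hodd.add_one.two_dvd 2)).symm
  rw [hD']
  exact (isAddDiffSet_twinPrimePowerSet hodd hq' hm).isAddDiffSetN_image_mul
    Fintype.one_lt_card _ fun x y hxy =>
      hα'.isUnit_shiftedPowers_sub hβ' (by omega) (by omega) hxy
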